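/- arXiv:1206.4810 — 6 statements merged into one kernel-verified Lean document; each statement's English description precedes it below -/
import Mathlib

section
/- Let T > 0, A > 0, k > 0 and b, σ : [0,T] × ℝ → ℝ. Suppose θ₁ : [0,T] × ℝ → ℝ is continuously differentiable in t and twice continuously differentiable in s, satisfies ∂_t θ₁ + b·∂_s θ₁ + (1/2)σ²·∂_{ss} θ₁ = 0 on [0,T] × ℝ and θ₁(T,s) = s for all s; and suppose θ₀ : [0,T] × ℝ → ℝ, with the same smoothness, satisfies ∂_t θ₀ + b·∂_s θ₀ + (1/2)σ²·∂_{ss} θ₀ + (2A/(e·k))·cosh(k·(θ₁(t,s) − s)) = 0 on [0,T] × ℝ and θ₀(T,s) = 0 for all s. Define u(t,s,q,x) = x + θ₀(t,s) + q·θ₁(t,s) for (t,s,q,x) ∈ [0,T] × ℝ × ℤ × ℝ. Then: (i) for every (t,s,q,x), the ask functional δ ↦ A·e^{−kδ}·(u(t,s,q−1,x+s+δ) − u(t,s,q,x)) attains its supremum over δ ∈ ℝ at the unique point δ⁺* = 1/k − s + θ₁(t,s), with supremum value (A/(e·k))·e^{−k(θ₁(t,s)−s)}, and the bid functional δ ↦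 A·e^{−kδ}·(u(t,s,q+1,x−s+δ) − u(t,s,q,x)) attains its supremum at the unique point δ⁻* = 1/k + s − θ₁(t,s), with value (A/(e·k))·e^{k(θ₁(t,s)−s)}; in particular the optimal bid–ask spread is δ⁺* + δ⁻* = 2/k; (ii) HJB(u)(t,s,q,x) = 0 for all (t,s,q,x) ∈ [0,T] × ℝ × ℤ × ℝ, and u(T,s,q,x) = x + q·s. -/
/-!
Since `u = x + θ₀ + q θ₁` is affine in `(q, x)`, the ask and bid increments of `u` are
`δ + (s − θ₁)` and `δ + (θ₁ − s)`, so both functionals have the form `A e^{−kδ} (δ + c)`.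
With `y = k (δ + c)` this is `(A/k) e^{kc} · y e^{−y}`, and `y e^{−y} < e^{−1}` for `y ≠ 1`
(because `e^{y−1} > y`): the unique maximiser is `δ = 1/k − c`, with value `(A/(e k)) e^{kc}`.
The two optimal values add up to `(2A/(e k)) cosh (k (θ₁ − s))`, so
`HJB(u) = (∂_t + 𝓛) θ₀ + q (∂_t + 𝓛) θ₁ + (2A/(e k)) cosh (k (θ₁ − s))` with
`𝓛 = b ∂_s + ½ σ² ∂_ss`, which vanishes by the two PDEs.
-/

/-- The Hamilton–Jacobi–Bellman expression of a value function
`u : (t,s,q,x) ↦ u t s q x` for the market-making problem with intensities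
`A·e^{−kδ}` and mid-price diffusion coefficients `b`, `σ`. -/
noncomputable def HJB (A k : ℝ) (b σ : ℝ → ℝ → ℝ) (u : ℝ → ℝ → ℤ → ℝ → ℝ)
    (t s : ℝ) (q : ℤ) (x : ℝ) : ℝ :=
  deriv (fun τ => u τ s q x) t
    + b t s * deriv (fun y => u t y q x) s
    + 1 / 2 * (σ t s) ^ 2 * deriv (deriv (fun y => u t y q x)) s
    + (⨆ δ : ℝ, A * Real.exp (-(k * δ)) * (u t s (q - 1) (x + s + δ) - u t s q x))
    + (⨆ δ : ℝ, A * Real.exp (-(k * δ)) * (u t s (q + 1) (x - s + δ) - u t s q x))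

open Real

theorem Real.mul_exp_neg_lt_exp_neg_one {y : ℝ} (hy : y ≠ 1) : y * exp (-y) < exp (-1) := by
  have h_lt : y < exp (y - 1) := by simpa using add_one_lt_exp (sub_ne_zero.mpr hy)
  calc y * exp (-y) < exp (y - 1) * exp (-y) := by gcongr
    _ = exp (-1) := by rw [← exp_add]; ring_nf

noncomputable def quoteGain (A k c δ : ℝ) : ℝ := A * exp (-(k * δ)) * (δ + c)

theorem quoteGain_eq_mul (A c δ : ℝ) {k : ℝ} (hk : k ≠ 0) :
    quoteGain A k c δ = A / k * exp (k * c) * (k * (δ + c) * exp (-(k * (δ + c)))) := by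
  have h_exp : exp (-(k * δ)) = exp (k * c) * exp (-(k * (δ + c))) := by
    rw [← exp_add]; ring_nf
  rw [quoteGain, h_exp]
  field_simp

theorem quoteGain_optimal (A c : ℝ) {k : ℝ} (hk : k ≠ 0) :
    quoteGain A k c (1 / k - c) = A / (exp 1 * k) * exp (k * c) := by
  rw [quoteGain_eq_mul A c _ hk, show k * (1 / k - c + c) = 1 by field_simp; ring, one_mul, exp_neg]
  field_simp

theorem quoteGain_lt_optimal {A k : ℝ} (hA : 0 < A) (hk : 0 < k) (c : ℝ) {δ : ℝ}
    (hδ : δ ≠ 1 / k - c) : quoteGain A k c δ < quoteGain A k c (1 / k - c) := by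
  have hy : k * (δ + c) ≠ 1 := fun h => hδ (by field_simp; linarith)
  rw [quoteGain_eq_mul A c δ hk.ne', quoteGain_eq_mul A c _ hk.ne',
    show k * (1 / k - c + c) = 1 by field_simp; ring, one_mul]
  gcongr
  exact mul_exp_neg_lt_exp_neg_one hy

theorem iSup_quoteGain {A k : ℝ} (hA : 0 < A) (hk : 0 < k) (c : ℝ) :
    ⨆ δ, quoteGain A k c δ = A / (exp 1 * k) * exp (k * c) := by
  have hle : ∀ δ, quoteGain A k c δ ≤ quoteGain A k c (1 / k - c) := fun δ => by
    rcases eq_or_ne δ (1 / k - c) with rfl | hδ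
    · exact le_rfl
    · exact (quoteGain_lt_optimal hA hk c hδ).le
  rw [← quoteGain_optimal A c hk.ne']
  exact le_antisymm (ciSup_le hle) (le_ciSup ⟨_, Set.forall_mem_range.2 hle⟩ _)

theorem deriv_const_add_add_const_mul {f g : ℝ → ℝ} {y : ℝ} (hf : DifferentiableAt ℝ f y)
    (hg : DifferentiableAt ℝ g y) (x q : ℝ) :
    deriv (fun z => x + f z + q * g z) y = deriv f y + q * deriv g y := by
  rw [deriv_fun_add (hf.const_add x) (hg.const_mul q), deriv_const_add, deriv_const_mul _ hg]

theorem deriv_deriv_const_add_add_const_mul {f g : ℝ → ℝ} {y : ℝ} (hf : Differentiable ℝ f)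
    (hg : Differentiable ℝ g) (hf' : DifferentiableAt ℝ (deriv f) y)
    (hg' : DifferentiableAt ℝ (deriv g) y) (x q : ℝ) :
    deriv (deriv (fun z => x + f z + q * g z)) y = deriv (deriv f) y + q * deriv (deriv g) y := by
  have h_deriv : deriv (fun z => x + f z + q * g z) = fun z => deriv f z + q * deriv g z :=
    funext fun z => deriv_const_add_add_const_mul (hf z) (hg z) x q
  rw [h_deriv, deriv_fun_add hf' (hg'.const_mul q), deriv_const_mul _ hg']

noncomputable def generator (b σ θ : ℝ → ℝ → ℝ) (t s : ℝ) : ℝ :=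
  deriv (fun τ => θ τ s) t + b t s * deriv (fun y => θ t y) s
    + 1 / 2 * (σ t s) ^ 2 * deriv (deriv (fun y => θ t y)) s

def affineValue (θ₀ θ₁ : ℝ → ℝ → ℝ) (t s : ℝ) (q : ℤ) (x : ℝ) : ℝ := x + θ₀ t s + q * θ₁ t s

section affineValue

variable (A k : ℝ) (θ₀ θ₁ : ℝ → ℝ → ℝ) (t s : ℝ) (q : ℤ) (x δ : ℝ)

theorem askGain_affineValue :
    A * exp (-(k * δ)) * (affineValue θ₀ θ₁ t s (q - 1) (x + s + δ) - affineValue θ₀ θ₁ t s q x)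
      = quoteGain A k (s - θ₁ t s) δ := by
  simp only [quoteGain, affineValue]; push_cast; ring

theorem bidGain_affineValue :
    A * exp (-(k * δ)) * (affineValue θ₀ θ₁ t s (q + 1) (x - s + δ) - affineValue θ₀ θ₁ t s q x)
      = quoteGain A k (θ₁ t s - s) δ := by
  simp only [quoteGain, affineValue]; push_cast; ring

end affineValue

theorem HJB_affineValue {A k : ℝ} (hA : 0 < A) (hk : 0 < k) (b σ θ₀ θ₁ : ℝ → ℝ → ℝ) {t s : ℝ}
    (h₀t : DifferentiableAt ℝ (fun τ => θ₀ τ s) t) (h₁t : DifferentiableAt ℝ (fun τ => θ₁ τ s) t)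
    (h₀s : ContDiff ℝ 2 fun y => θ₀ t y) (h₁s : ContDiff ℝ 2 fun y => θ₁ t y) (q : ℤ) (x : ℝ) :
    HJB A k b σ (affineValue θ₀ θ₁) t s q x
      = generator b σ θ₀ t s + q * generator b σ θ₁ t s
        + 2 * A / (exp 1 * k) * cosh (k * (θ₁ t s - s)) := by
  simp only [HJB, askGain_affineValue, bidGain_affineValue]
  rw [iSup_quoteGain hA hk, iSup_quoteGain hA hk]
  simp only [affineValue]
  rw [deriv_const_add_add_const_mul h₀t h₁t,
    deriv_const_add_add_const_mul (h₀s.differentiable two_ne_zero s)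
      (h₁s.differentiable two_ne_zero s),
    deriv_deriv_const_add_add_const_mul (h₀s.differentiable two_ne_zero)
      (h₁s.differentiable two_ne_zero) (h₀s.differentiable_deriv_two s)
      (h₁s.differentiable_deriv_two s),
    cosh_eq, show k * (s - θ₁ t s) = -(k * (θ₁ t s - s)) by ring, generator, generator]
  ring

theorem stmt_2_general (T A k : ℝ) (hA : 0 < A) (hk : 0 < k)
    (b σ θ₀ θ₁ : ℝ → ℝ → ℝ)
    (hθ₁t : ∀ s : ℝ, ContDiff ℝ 1 fun τ => θ₁ τ s)
    (hθ₁s : ∀ t : ℝ, ContDiff ℝ 2 fun y => θ₁ t y)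
    (hθ₁pde : ∀ t ∈ Set.Icc (0 : ℝ) T, ∀ s : ℝ,
      deriv (fun τ => θ₁ τ s) t + b t s * deriv (fun y => θ₁ t y) s
        + 1 / 2 * (σ t s) ^ 2 * deriv (deriv (fun y => θ₁ t y)) s = 0)
    (hθ₁T : ∀ s : ℝ, θ₁ T s = s)
    (hθ₀t : ∀ s : ℝ, ContDiff ℝ 1 fun τ => θ₀ τ s)
    (hθ₀s : ∀ t : ℝ, ContDiff ℝ 2 fun y => θ₀ t y)
    (hθ₀pde : ∀ t ∈ Set.Icc (0 : ℝ) T, ∀ s : ℝ,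
      deriv (fun τ => θ₀ τ s) t + b t s * deriv (fun y => θ₀ t y) s
        + 1 / 2 * (σ t s) ^ 2 * deriv (deriv (fun y => θ₀ t y)) s
        + 2 * A / (Real.exp 1 * k) * Real.cosh (k * (θ₁ t s - s)) = 0)
    (hθ₀T : ∀ s : ℝ, θ₀ T s = 0)
    (u : ℝ → ℝ → ℤ → ℝ → ℝ)
    (hu : ∀ (t s : ℝ) (q : ℤ) (x : ℝ), u t s q x = x + θ₀ t s + (q : ℝ) * θ₁ t s) :
    ∀ t ∈ Set.Icc (0 : ℝ) T, ∀ (s : ℝ) (q : ℤ) (x : ℝ),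
      -- (i) the ask functional attains its supremum at the unique point
      -- `δ⁺* = 1/k − s + θ₁(t,s)`, with value `(A/(e·k))·e^{−k(θ₁ − s)}`
      (A * Real.exp (-(k * (1 / k - s + θ₁ t s)))
            * (u t s (q - 1) (x + s + (1 / k - s + θ₁ t s)) - u t s q x)
          = A / (Real.exp 1 * k) * Real.exp (-(k * (θ₁ t s - s)))) ∧
      (∀ δ : ℝ, δ ≠ 1 / k - s + θ₁ t s →
        A * Real.exp (-(k * δ)) * (u t s (q - 1) (x + s + δ) - u t s q x)
          < A * Real.exp (-(k * (1 / k - s + θ₁ t s)))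
              * (u t s (q - 1) (x + s + (1 / k - s + θ₁ t s)) - u t s q x)) ∧
      -- the bid functional attains its supremum at the unique point
      -- `δ⁻* = 1/k + s − θ₁(t,s)`, with value `(A/(e·k))·e^{k(θ₁ − s)}`
      (A * Real.exp (-(k * (1 / k + s - θ₁ t s)))
            * (u t s (q + 1) (x - s + (1 / k + s - θ₁ t s)) - u t s q x)
          = A / (Real.exp 1 * k) * Real.exp (k * (θ₁ t s - s))) ∧
      (∀ δ : ℝ, δ ≠ 1 / k + s - θ₁ t s →
        A * Real.exp (-(k * δ)) * (u t s (q + 1) (x - s + δ) - u t s q x)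
          < A * Real.exp (-(k * (1 / k + s - θ₁ t s)))
              * (u t s (q + 1) (x - s + (1 / k + s - θ₁ t s)) - u t s q x)) ∧
      -- in particular the optimal bid–ask spread is `2/k`
      ((1 / k - s + θ₁ t s) + (1 / k + s - θ₁ t s) = 2 / k) ∧
      -- (ii) `u` solves the HJB equation with terminal condition `x + q·s`
      HJB A k b σ u t s q x = 0 ∧
      u T s q x = x + (q : ℝ) * s := by
  intro t ht s q x
  obtain rfl : u = affineValue θ₀ θ₁ := by funext t s q x; exact hu t s q x
  have h₀ : generator b σ θ₀ t s + 2 * A / (exp 1 * k) * cosh (k * (θ₁ t s - s)) = 0 :=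
    hθ₀pde t ht s
  have h₁ : generator b σ θ₁ t s = 0 := hθ₁pde t ht s
  simp only [askGain_affineValue, bidGain_affineValue,
    show 1 / k - s + θ₁ t s = 1 / k - (s - θ₁ t s) by ring,
    show 1 / k + s - θ₁ t s = 1 / k - (θ₁ t s - s) by ring,
    show -(k * (θ₁ t s - s)) = k * (s - θ₁ t s) by ring]
  refine ⟨quoteGain_optimal _ _ hk.ne', fun δ hδ => quoteGain_lt_optimal hA hk _ hδ,
    quoteGain_optimal _ _ hk.ne', fun δ hδ => quoteGain_lt_optimal hA hk _ hδ, by ring, ?_, ?_⟩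
  · rw [HJB_affineValue hA hk b σ θ₀ θ₁ ((hθ₀t s).differentiable one_ne_zero t)
      ((hθ₁t s).differentiable one_ne_zero t) (hθ₀s t) (hθ₁s t)]
    linear_combination h₀ + (q : ℝ) * h₁
  · simp [affineValue, hθ₀T, hθ₁T]

/-- Verification theorem for the linear utility `φ(s,q,x) = x + q·s` (Theorem 1 of the
paper): with `θ₁`, `θ₀` the Feynman–Kac solutions of the stated PDEs, the function
`u(t,s,q,x) = x + θ₀(t,s) + q·θ₁(t,s)` satisfies the HJB equation, the ask/bid
functionals attain their suprema at the unique points `δ±* = 1/k ∓ (s − θ₁)` with the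
stated values, and the optimal spread is `2/k`. -/
theorem stmt_2 (T A k : ℝ) (hT : 0 < T) (hA : 0 < A) (hk : 0 < k)
    (b σ θ₀ θ₁ : ℝ → ℝ → ℝ)
    (hθ₁t : ∀ s : ℝ, ContDiff ℝ 1 fun τ => θ₁ τ s)
    (hθ₁s : ∀ t : ℝ, ContDiff ℝ 2 fun y => θ₁ t y)
    (hθ₁pde : ∀ t ∈ Set.Icc (0 : ℝ) T, ∀ s : ℝ,
      deriv (fun τ => θ₁ τ s) t + b t s * deriv (fun y => θ₁ t y) s
        + 1 / 2 * (σ t s) ^ 2 * deriv (deriv (fun y => θ₁ t y)) s = 0)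
    (hθ₁T : ∀ s : ℝ, θ₁ T s = s)
    (hθ₀t : ∀ s : ℝ, ContDiff ℝ 1 fun τ => θ₀ τ s)
    (hθ₀s : ∀ t : ℝ, ContDiff ℝ 2 fun y => θ₀ t y)
    (hθ₀pde : ∀ t ∈ Set.Icc (0 : ℝ) T, ∀ s : ℝ,
      deriv (fun τ => θ₀ τ s) t + b t s * deriv (fun y => θ₀ t y) s
        + 1 / 2 * (σ t s) ^ 2 * deriv (deriv (fun y => θ₀ t y)) s
        + 2 * A / (Real.exp 1 * k) * Real.cosh (k * (θ₁ t s - s)) = 0)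
    (hθ₀T : ∀ s : ℝ, θ₀ T s = 0)
    (u : ℝ → ℝ → ℤ → ℝ → ℝ)
    (hu : ∀ (t s : ℝ) (q : ℤ) (x : ℝ), u t s q x = x + θ₀ t s + (q : ℝ) * θ₁ t s) :
    ∀ t ∈ Set.Icc (0 : ℝ) T, ∀ (s : ℝ) (q : ℤ) (x : ℝ),
      -- (i) the ask functional attains its supremum at the unique point
      -- `δ⁺* = 1/k − s + θ₁(t,s)`, with value `(A/(e·k))·e^{−k(θ₁ − s)}`
      (A * Real.exp (-(k * (1 / k - s + θ₁ t s)))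
            * (u t s (q - 1) (x + s + (1 / k - s + θ₁ t s)) - u t s q x)
          = A / (Real.exp 1 * k) * Real.exp (-(k * (θ₁ t s - s)))) ∧
      (∀ δ : ℝ, δ ≠ 1 / k - s + θ₁ t s →
        A * Real.exp (-(k * δ)) * (u t s (q - 1) (x + s + δ) - u t s q x)
          < A * Real.exp (-(k * (1 / k - s + θ₁ t s)))
              * (u t s (q - 1) (x + s + (1 / k - s + θ₁ t s)) - u t s q x)) ∧
      -- the bid functional attains its supremum at the unique point
      -- `δ⁻* = 1/k + s − θ₁(t,s)`, with value `(A/(e·k))·e^{k(θ₁ − s)}`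
      (A * Real.exp (-(k * (1 / k + s - θ₁ t s)))
            * (u t s (q + 1) (x - s + (1 / k + s - θ₁ t s)) - u t s q x)
          = A / (Real.exp 1 * k) * Real.exp (k * (θ₁ t s - s))) ∧
      (∀ δ : ℝ, δ ≠ 1 / k + s - θ₁ t s →
        A * Real.exp (-(k * δ)) * (u t s (q + 1) (x - s + δ) - u t s q x)
          < A * Real.exp (-(k * (1 / k + s - θ₁ t s)))
              * (u t s (q + 1) (x - s + (1 / k + s - θ₁ t s)) - u t s q x)) ∧
      -- in particular the optimal bid–ask spread is `2/k`
      ((1 / k - s + θ₁ t s) + (1 / k + s - θ₁ t s) = 2 / k) ∧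
      -- (ii) `u` solves the HJB equation with terminal condition `x + q·s`
      HJB A k b σ u t s q x = 0 ∧
      u T s q x = x + (q : ℝ) * s :=
  stmt_2_general T A k hA hk b σ θ₀ θ₁ hθ₁t hθ₁s hθ₁pde hθ₁T hθ₀t hθ₀s hθ₀pde hθ₀T u hu
end

section
/- Let T > 0, A > 0, k > 0, let b, σ : [0,T] × ℝ → ℝ be continuous and bounded, and let g : [0,T] × ℝ → ℝ be continuous with g(t,s) ≥ 2A/(e·k) for all (t,s). Suppose θ₀ : [0,T] × ℝ → ℝ is continuous and bounded on [0,T] × ℝ, continuously differentiable in t and twice continuously differentiable in s on [0,T) × ℝ, satisfies ∂_t θ₀ + b·∂_s θ₀ + (1/2)σ²·∂_{ss} θ₀ + g = 0 on [0,T) × ℝ, and θ₀(T,s) = 0 for all s. Then θ₀(t,s) ≥ (2A/(e·k))·(T − t) for all (t,s) ∈ [0,T] × ℝ. -/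
/-!
Put `u = θ₀ + c (t - T)` with `c = 2A/(e k)`. Since `g ≥ c`, `u` satisfies
`∂ₜu + b ∂ₛu + ½σ² ∂ₛₛu = c - g ≤ 0` and `u(T, ·) = 0`; the claim is `u ≥ 0`, a weak minimum
principle. For `ε > 0` add the barrier `ψ = ε e^{λ(T-t)} (1 + s²)`. Since `u` is bounded below,
`u + ψ` grows quadratically in `s` and attains its minimum on `[0, T] × ℝ`. For
`λ > sup |b| + sup σ²` the barrier satisfies `∂ₜψ + b ∂ₛψ + ½σ² ∂ₛₛψ < 0`, which is impossible at
a minimum with `t < T` (there `∂ₜ ≥ 0`, `∂ₛ = 0`, `∂ₛₛ ≥ 0`). So the minimum lies at `t = T`, where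
`u + ψ > 0`; letting `ε → 0` gives `u ≥ 0`.
-/

open Set Filter Topology Real

noncomputable def parabolicOp (b σ u : ℝ → ℝ → ℝ) (t s : ℝ) : ℝ :=
  deriv (fun τ => u τ s) t + b t s * deriv (u t) s + 1 / 2 * σ t s ^ 2 * deriv (deriv (u t)) s

theorem IsMinOn.deriv_nonneg_of_Icc_left {f : ℝ → ℝ} {a b : ℝ} (hab : a < b)
    (hmin : IsMinOn f (Icc a b) a) (hf : DifferentiableAt ℝ f a) : 0 ≤ deriv f a := by
  have hcone : b - a ∈ posTangentConeAt (Icc a b) a :=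
    sub_mem_posTangentConeAt_of_segment_subset (segment_eq_Icc hab.le ▸ Subset.rfl)
  have h := hmin.localize.hasFDerivWithinAt_nonneg
    hf.hasDerivAt.hasDerivWithinAt.hasFDerivWithinAt hcone
  rw [ContinuousLinearMap.toSpanSingleton_apply, smul_eq_mul] at h
  exact nonneg_of_mul_nonneg_right h (sub_pos.2 hab)

/-- Otherwise the second-derivative test makes `x` also a local maximum, so `f` is locally
constant and `deriv (deriv f) x = 0`. -/
theorem IsLocalMin.deriv_deriv_nonneg {f : ℝ → ℝ} {x : ℝ} (hmin : IsLocalMin f x)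
    (hc : ContinuousAt f x) : 0 ≤ deriv (deriv f) x := by
  by_contra! hneg
  have hmax := isLocalMax_of_deriv_deriv_neg hneg hmin.deriv_eq_zero hc
  have hconst : f =ᶠ[𝓝 x] fun _ => f x :=
    (hmin.and hmax).mono fun y hy => le_antisymm hy.2 hy.1
  have hzero : deriv (deriv f) x = 0 := by
    rw [hconst.deriv.deriv_eq]
    simp
  exact hneg.ne hzero

theorem exists_isMinOn_prod_univ {α : Type*} [TopologicalSpace α] [T2Space α] {S : Set α}
    (hS : IsCompact S) (hne : S.Nonempty) {f : α × ℝ → ℝ} (hf : ContinuousOn f (S ×ˢ univ))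
    (hcoer : ∀ C, ∃ R, ∀ p ∈ S ×ˢ univ, R < |p.2| → C ≤ f p) :
    ∃ p ∈ S ×ˢ univ, IsMinOn f (S ×ˢ univ) p := by
  obtain ⟨x, hx⟩ := hne
  obtain ⟨R, hR⟩ := hcoer (f (x, 0))
  refine hf.exists_isMinOn' (hS.isClosed.prod isClosed_univ) (x₀ := (x, 0)) ⟨hx, trivial⟩ ?_
  rw [eventually_inf_principal, eventually_iff, mem_cocompact]
  refine ⟨S ×ˢ Icc (-R) R, hS.prod isCompact_Icc, fun p hp hpS => hR p hpS ?_⟩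
  by_contra! h
  exact hp ⟨hpS.1, abs_le.mp h⟩

theorem parabolicOp_add {b σ u v : ℝ → ℝ → ℝ} {t s : ℝ}
    (hut : DifferentiableAt ℝ (fun τ => u τ s) t) (hvt : DifferentiableAt ℝ (fun τ => v τ s) t)
    (hus : Differentiable ℝ (u t)) (hvs : Differentiable ℝ (v t))
    (hus' : DifferentiableAt ℝ (deriv (u t)) s) (hvs' : DifferentiableAt ℝ (deriv (v t)) s) :
    parabolicOp b σ (fun t s => u t s + v t s) t s =
      parabolicOp b σ u t s + parabolicOp b σ v t s := by
  have hdt : deriv (fun τ => u τ s + v τ s) t =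
      deriv (fun τ => u τ s) t + deriv (fun τ => v τ s) t :=
    deriv_add hut hvt
  have hds : deriv (fun y => u t y + v t y) = fun y => deriv (u t) y + deriv (v t) y :=
    funext fun y => deriv_add (hus y) (hvs y)
  have hdss : deriv (fun y => deriv (u t) y + deriv (v t) y) s =
      deriv (deriv (u t)) s + deriv (deriv (v t)) s :=
    deriv_add hus' hvs'
  simp only [parabolicOp, hdt, hds, hdss]
  ring

theorem parabolicOp_add_time {b σ u : ℝ → ℝ → ℝ} {f : ℝ → ℝ} {t s : ℝ}
    (hut : DifferentiableAt ℝ (fun τ => u τ s) t) (hf : DifferentiableAt ℝ f t) :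
    parabolicOp b σ (fun t s => u t s + f t) t s = parabolicOp b σ u t s + deriv f t := by
  have hdt : deriv (fun τ => u τ s + f τ) t = deriv (fun τ => u τ s) t + deriv f t :=
    deriv_add hut hf
  simp only [parabolicOp, hdt, deriv_add_const']
  ring

theorem parabolicOp_nonneg_of_isMinOn {b σ w : ℝ → ℝ → ℝ} {a T t₀ s₀ : ℝ}
    (hmin : IsMinOn (fun p : ℝ × ℝ => w p.1 p.2) (Icc a T ×ˢ univ) (t₀, s₀))
    (ht₀ : t₀ ∈ Ico a T) (hwt : DifferentiableAt ℝ (fun τ => w τ s₀) t₀)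
    (hws : ContinuousAt (w t₀) s₀) : 0 ≤ parabolicOp b σ w t₀ s₀ := by
  have hmin_t : IsMinOn (fun τ => w τ s₀) (Icc t₀ T) t₀ :=
    hmin.comp_mapsTo (g := fun τ => (τ, s₀))
      (fun τ hτ => ⟨⟨ht₀.1.trans hτ.1, hτ.2⟩, trivial⟩) rfl
  have hmin_s : IsLocalMin (w t₀) s₀ :=
    (hmin.comp_mapsTo (g := fun y => (t₀, y))
      (fun _ _ => ⟨Ico_subset_Icc_self ht₀, trivial⟩) rfl).isLocalMin univ_mem
  have hdt := hmin_t.deriv_nonneg_of_Icc_left ht₀.2 hwt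
  have hdss := hmin_s.deriv_deriv_nonneg hws
  rw [parabolicOp, hmin_s.deriv_eq_zero]
  have := mul_nonneg (sq_nonneg (σ t₀ s₀)) hdss
  linarith

noncomputable def barrier (ε lam T t s : ℝ) : ℝ := ε * exp (lam * (T - t)) * (1 + s ^ 2)

theorem mul_one_add_sq_le_barrier {ε lam T t : ℝ} (s : ℝ) (hε : 0 ≤ ε) (hlam : 0 ≤ lam)
    (ht : t ≤ T) : ε * (1 + s ^ 2) ≤ barrier ε lam T t s := by
  have : 1 ≤ exp (lam * (T - t)) := one_le_exp (mul_nonneg hlam (sub_nonneg.2 ht))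
  unfold barrier
  gcongr
  nlinarith

theorem parabolicOp_barrier (b σ : ℝ → ℝ → ℝ) (ε lam T t s : ℝ) :
    parabolicOp b σ (barrier ε lam T) t s =
      ε * exp (lam * (T - t)) * (2 * b t s * s + σ t s ^ 2 - lam * (1 + s ^ 2)) := by
  have ht : HasDerivAt (fun τ => barrier ε lam T τ s)
      (ε * (exp (lam * (T - t)) * (lam * -1)) * (1 + s ^ 2)) t := by
    have h := ((((hasDerivAt_id t).const_sub T).const_mul lam).exp.const_mul ε).mul_const
      (1 + s ^ 2)
    simpa only [barrier, id] using h
  have hs : deriv (barrier ε lam T t) = fun y => ε * exp (lam * (T - t)) * (2 * y) := by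
    funext y
    have h := ((hasDerivAt_pow 2 y).const_add 1).const_mul (ε * exp (lam * (T - t)))
    norm_num at h
    exact h.deriv
  have hss : deriv (fun y => ε * exp (lam * (T - t)) * (2 * y)) s =
      ε * exp (lam * (T - t)) * 2 := by
    simp
  rw [parabolicOp, ht.deriv, hs, hss]
  ring

theorem parabolicOp_barrier_neg {b σ : ℝ → ℝ → ℝ} {ε lam T t s Mb Mσ : ℝ} (hε : 0 < ε)
    (hlam : Mb + Mσ ^ 2 < lam) (hb : |b t s| ≤ Mb) (hσ : |σ t s| ≤ Mσ) :
    parabolicOp b σ (barrier ε lam T) t s < 0 := by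
  rw [parabolicOp_barrier]
  refine mul_neg_of_pos_of_neg (by positivity) ?_
  have hbs : 2 * b t s * s ≤ Mb * (1 + s ^ 2) := calc
    2 * b t s * s ≤ |b t s| * (1 + s ^ 2) := by
      nlinarith [abs_mul_abs_self s, sq_nonneg (|s| - 1), abs_nonneg (b t s),
        abs_mul (b t s) s, le_abs_self (b t s * s)]
    _ ≤ Mb * (1 + s ^ 2) := by gcongr
  have hσ2 : σ t s ^ 2 ≤ Mσ ^ 2 := by
    rw [← sq_abs]
    exact pow_le_pow_left₀ (abs_nonneg _) hσ 2
  nlinarith [mul_nonneg (sq_nonneg Mσ) (sq_nonneg s)]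

section MinimumPrinciple

variable {b σ u : ℝ → ℝ → ℝ} {a T Mu Mb Mσ : ℝ}

theorem add_barrier_pos {ε lam : ℝ} (haT : a ≤ T) (hε : 0 < ε) (hlam₀ : 0 ≤ lam)
    (hlam : Mb + Mσ ^ 2 < lam)
    (hu_cont : ContinuousOn (fun p : ℝ × ℝ => u p.1 p.2) (Icc a T ×ˢ univ))
    (hu_bdd : ∀ t ∈ Icc a T, ∀ s, Mu ≤ u t s)
    (hu_t : ∀ s, ∀ t ∈ Ico a T, DifferentiableAt ℝ (fun τ => u τ s) t)
    (hu_s : ∀ t ∈ Ico a T, Differentiable ℝ (u t))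
    (hu_ss : ∀ t ∈ Ico a T, Differentiable ℝ (deriv (u t)))
    (hb : ∀ t ∈ Ico a T, ∀ s, |b t s| ≤ Mb) (hσ : ∀ t ∈ Ico a T, ∀ s, |σ t s| ≤ Mσ)
    (hLu : ∀ t ∈ Ico a T, ∀ s, parabolicOp b σ u t s ≤ 0) (hterm : ∀ s, 0 ≤ u T s) :
    ∀ t ∈ Icc a T, ∀ s, 0 < u t s + barrier ε lam T t s := by
  set w : ℝ → ℝ → ℝ := fun t s => u t s + barrier ε lam T t s with hw
  have hcoer : ∀ C, ∃ R, ∀ p ∈ Icc a T ×ˢ univ, R < |p.2| → C ≤ w p.1 p.2 := by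
    refine fun C => ⟨max 1 ((C - Mu) / ε), fun p hp hR => ?_⟩
    have h1 : 1 < |p.2| := (le_max_left _ _).trans_lt hR
    have h2 : (C - Mu) / ε < |p.2| := (le_max_right _ _).trans_lt hR
    have h3 : C - Mu < ε * p.2 ^ 2 := by
      have : |p.2| ≤ p.2 ^ 2 := by nlinarith [sq_abs p.2]
      rw [div_lt_iff₀ hε] at h2
      nlinarith
    have := mul_one_add_sq_le_barrier p.2 hε.le hlam₀ hp.1.2
    linarith [hu_bdd p.1 hp.1 p.2]
  have hw_cont : ContinuousOn (fun p : ℝ × ℝ => w p.1 p.2) (Icc a T ×ˢ univ) :=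
    hu_cont.add (by unfold barrier; fun_prop)
  obtain ⟨⟨t₀, s₀⟩, ⟨ht₀ : t₀ ∈ Icc a T, -⟩, hmin⟩ :=
    exists_isMinOn_prod_univ isCompact_Icc (nonempty_Icc.2 haT) hw_cont hcoer
  suffices 0 < w t₀ s₀ from fun t ht s =>
    this.trans_le (isMinOn_iff.1 hmin (t, s) ⟨ht, trivial⟩)
  rcases ht₀.2.eq_or_lt with rfl | hlt
  · have : 0 < barrier ε lam t₀ t₀ s₀ := by unfold barrier; positivity
    linarith [hterm s₀]
  · exfalso
    have ht₀' : t₀ ∈ Ico a T := ⟨ht₀.1, hlt⟩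
    have hbar_t : DifferentiableAt ℝ (fun τ => barrier ε lam T τ s₀) t₀ := by
      unfold barrier; fun_prop
    have hbar_s : ContDiff ℝ 2 (barrier ε lam T t₀) := by
      unfold barrier; fun_prop
    have hLw_nonneg : 0 ≤ parabolicOp b σ w t₀ s₀ :=
      parabolicOp_nonneg_of_isMinOn hmin ht₀' ((hu_t s₀ t₀ ht₀').add hbar_t)
        ((hu_s t₀ ht₀' s₀).add (hbar_s.differentiable two_ne_zero s₀)).continuousAt
    have hLw : parabolicOp b σ w t₀ s₀ =
        parabolicOp b σ u t₀ s₀ + parabolicOp b σ (barrier ε lam T) t₀ s₀ :=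
      parabolicOp_add (hu_t s₀ t₀ ht₀') hbar_t (hu_s t₀ ht₀') (hbar_s.differentiable two_ne_zero)
        (hu_ss t₀ ht₀' s₀) (hbar_s.differentiable_deriv_two s₀)
    linarith [hLu t₀ ht₀' s₀,
      parabolicOp_barrier_neg (T := T) hε hlam (hb t₀ ht₀' s₀) (hσ t₀ ht₀' s₀)]

theorem nonneg_of_parabolicOp_nonpos
    (hu_cont : ContinuousOn (fun p : ℝ × ℝ => u p.1 p.2) (Icc a T ×ˢ univ))
    (hu_bdd : ∀ t ∈ Icc a T, ∀ s, Mu ≤ u t s)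
    (hu_t : ∀ s, ∀ t ∈ Ico a T, DifferentiableAt ℝ (fun τ => u τ s) t)
    (hu_s : ∀ t ∈ Ico a T, Differentiable ℝ (u t))
    (hu_ss : ∀ t ∈ Ico a T, Differentiable ℝ (deriv (u t)))
    (hb : ∀ t ∈ Ico a T, ∀ s, |b t s| ≤ Mb) (hσ : ∀ t ∈ Ico a T, ∀ s, |σ t s| ≤ Mσ)
    (hLu : ∀ t ∈ Ico a T, ∀ s, parabolicOp b σ u t s ≤ 0) (hterm : ∀ s, 0 ≤ u T s) :
    ∀ t ∈ Icc a T, ∀ s, 0 ≤ u t s := by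
  intro t ht s
  set lam := |Mb| + Mσ ^ 2 + 1
  have hlam : Mb + Mσ ^ 2 < lam := by linarith [le_abs_self Mb]
  by_contra! hneg
  -- the `ε` for which the barrier at `(t, s)` equals `-u t s`
  have hC : 0 < exp (lam * (T - t)) * (1 + s ^ 2) := by positivity
  have hpos := add_barrier_pos (ht.1.trans ht.2) (div_pos (neg_pos.2 hneg) hC) (by positivity)
    hlam hu_cont hu_bdd hu_t hu_s hu_ss hb hσ hLu hterm t ht s
  unfold barrier at hpos
  field_simp at hpos
  linarith

end MinimumPrinciple

theorem stmt_3_general (T A k : ℝ)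
    (b σ g θ₀ : ℝ → ℝ → ℝ)
    (hb_bdd : ∃ M : ℝ, ∀ t ∈ Set.Icc (0 : ℝ) T, ∀ s : ℝ, |b t s| ≤ M)
    (hσ_bdd : ∃ M : ℝ, ∀ t ∈ Set.Icc (0 : ℝ) T, ∀ s : ℝ, |σ t s| ≤ M)
    (hg_lb : ∀ t ∈ Set.Icc (0 : ℝ) T, ∀ s : ℝ, 2 * A / (Real.exp 1 * k) ≤ g t s)
    (hθ₀_cont : ContinuousOn (fun p : ℝ × ℝ => θ₀ p.1 p.2) (Set.Icc 0 T ×ˢ Set.univ))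
    (hθ₀_bdd : ∃ M : ℝ, ∀ t ∈ Set.Icc (0 : ℝ) T, ∀ s : ℝ, |θ₀ t s| ≤ M)
    (hθ₀_t : ∀ s : ℝ, ∀ t ∈ Set.Ico (0 : ℝ) T, ContDiffAt ℝ 1 (fun τ => θ₀ τ s) t)
    (hθ₀_s : ∀ t ∈ Set.Ico (0 : ℝ) T, ContDiff ℝ 2 fun y => θ₀ t y)
    (hpde : ∀ t ∈ Set.Ico (0 : ℝ) T, ∀ s : ℝ,
      deriv (fun τ => θ₀ τ s) t + b t s * deriv (fun y => θ₀ t y) s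
        + 1 / 2 * (σ t s) ^ 2 * deriv (deriv (fun y => θ₀ t y)) s + g t s = 0)
    (hterm : ∀ s : ℝ, θ₀ T s = 0) :
    ∀ t ∈ Set.Icc (0 : ℝ) T, ∀ s : ℝ, 2 * A / (Real.exp 1 * k) * (T - t) ≤ θ₀ t s := by
  obtain ⟨Mb, hMb⟩ := hb_bdd
  obtain ⟨Mσ, hMσ⟩ := hσ_bdd
  obtain ⟨Mθ, hMθ⟩ := hθ₀_bdd
  set c := 2 * A / (Real.exp 1 * k)
  have hθ_t s t (ht : t ∈ Ico 0 T) : DifferentiableAt ℝ (fun τ => θ₀ τ s) t :=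
    (hθ₀_t s t ht).differentiableAt one_ne_zero
  have hu_bdd (t) (ht : t ∈ Icc 0 T) (s) : -Mθ - |c| * T ≤ θ₀ t s + c * (t - T) := by
    nlinarith [abs_le.1 (hMθ t ht s), neg_abs_le c, le_abs_self c, ht.1, ht.2]
  have hLu (t) (ht : t ∈ Ico 0 T) (s) :
      parabolicOp b σ (fun t s => θ₀ t s + c * (t - T)) t s ≤ 0 := by
    have hL : parabolicOp b σ θ₀ t s + g t s = 0 := hpde t ht s
    have hc : deriv (fun τ => c * (τ - T)) t = c := by simp
    rw [parabolicOp_add_time (hθ_t s t ht) (by fun_prop), hc]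
    linarith [hg_lb t (Ico_subset_Icc_self ht) s]
  have hu_nonneg := nonneg_of_parabolicOp_nonpos (hθ₀_cont.add (by fun_prop)) hu_bdd
    (fun s t ht => (hθ_t s t ht).add (by fun_prop))
    (fun t ht => ((hθ₀_s t ht).differentiable two_ne_zero).add_const _)
    (fun t ht => by
      simpa only [deriv_add_const'] using (hθ₀_s t ht).differentiable_deriv_two)
    (fun t ht => hMb t (Ico_subset_Icc_self ht)) (fun t ht => hMσ t (Ico_subset_Icc_self ht))
    hLu (fun s => by simp [hterm s])
  intro t ht s
  linarith [hu_nonneg t ht s]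

/-- Parabolic maximum-principle form of item 3 of Theorem 1: if `θ₀` is continuous
and bounded on `[0,T] × ℝ`, smooth on `[0,T) × ℝ`, solves
`∂ₜθ₀ + b·∂ₛθ₀ + (1/2)σ²·∂ₛₛθ₀ + g = 0` with `g ≥ 2A/(e·k)` and `θ₀(T,·) = 0`,
then `θ₀(t,s) ≥ (2A/(e·k))·(T − t)` on `[0,T] × ℝ`. -/
theorem stmt_3 (T A k : ℝ) (hT : 0 < T) (hA : 0 < A) (hk : 0 < k)
    (b σ g θ₀ : ℝ → ℝ → ℝ)
    (hb_cont : ContinuousOn (fun p : ℝ × ℝ => b p.1 p.2) (Set.Icc 0 T ×ˢ Set.univ))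
    (hb_bdd : ∃ M : ℝ, ∀ t ∈ Set.Icc (0 : ℝ) T, ∀ s : ℝ, |b t s| ≤ M)
    (hσ_cont : ContinuousOn (fun p : ℝ × ℝ => σ p.1 p.2) (Set.Icc 0 T ×ˢ Set.univ))
    (hσ_bdd : ∃ M : ℝ, ∀ t ∈ Set.Icc (0 : ℝ) T, ∀ s : ℝ, |σ t s| ≤ M)
    (hg_cont : ContinuousOn (fun p : ℝ × ℝ => g p.1 p.2) (Set.Icc 0 T ×ˢ Set.univ))
    (hg_lb : ∀ t ∈ Set.Icc (0 : ℝ) T, ∀ s : ℝ, 2 * A / (Real.exp 1 * k) ≤ g t s)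
    (hθ₀_cont : ContinuousOn (fun p : ℝ × ℝ => θ₀ p.1 p.2) (Set.Icc 0 T ×ˢ Set.univ))
    (hθ₀_bdd : ∃ M : ℝ, ∀ t ∈ Set.Icc (0 : ℝ) T, ∀ s : ℝ, |θ₀ t s| ≤ M)
    (hθ₀_t : ∀ s : ℝ, ∀ t ∈ Set.Ico (0 : ℝ) T, ContDiffAt ℝ 1 (fun τ => θ₀ τ s) t)
    (hθ₀_s : ∀ t ∈ Set.Ico (0 : ℝ) T, ContDiff ℝ 2 fun y => θ₀ t y)
    (hpde : ∀ t ∈ Set.Ico (0 : ℝ) T, ∀ s : ℝ,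
      deriv (fun τ => θ₀ τ s) t + b t s * deriv (fun y => θ₀ t y) s
        + 1 / 2 * (σ t s) ^ 2 * deriv (deriv (fun y => θ₀ t y)) s + g t s = 0)
    (hterm : ∀ s : ℝ, θ₀ T s = 0) :
    ∀ t ∈ Set.Icc (0 : ℝ) T, ∀ s : ℝ, 2 * A / (Real.exp 1 * k) * (T - t) ≤ θ₀ t s :=
  stmt_3_general T A k b σ g θ₀ hb_bdd hσ_bdd hg_lb hθ₀_cont hθ₀_bdd hθ₀_t hθ₀_s hpde hterm
end

section
/- Let A > 0, k > 0, η ≥ 0, and let θ₀, θ₁, θ₂ : [0,T] × ℝ → ℝ be arbitrary functions. Define u(t,s,q,x) = x + θ₀(t,s) + q·θ₁(t,s) − η·q²·θ₂(t,s) for (t,s,q,x) ∈ [0,T] × ℝ × ℤ × ℝ. Then for every (t,s,q,x): (i) the ask functional δ ↦ A·e^{−kδ}·(u(t,s,q−1,x+s+δ) − u(t,s,q,x)) attains its supremum over δ ∈ ℝ at the unique point δ⁺* = 1/k − s + θ₁(t,s) + η·(1−2q)·θ₂(t,s); (ii) the bid functional δ ↦ A·e^{−kδ}·(u(t,s,q+1,x−s+δ)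 − u(t,s,q,x)) attains its supremum at the unique point δ⁻* = 1/k + s − θ₁(t,s) + η·(1+2q)·θ₂(t,s); (iii) consequently the optimal bid–ask spread is ψ* = δ⁺* + δ⁻* = 2/k + 2η·θ₂(t,s), and the indifference price r* = s + (δ⁺* − δ⁻*)/2 equals θ₁(t,s) − 2η·q·θ₂(t,s). -/
/-!
Under the quadratic ansatz the gain `u(q ∓ 1, x ± s + δ) − u(q, x)` from an execution is affine in
the quote, `δ − (δ* − 1/k)`, so both functionals have the shape `δ ↦ A e^{−kδ} (δ − c)`. Writing
`y = k (δ − (c + 1/k))`, this equals its value at `c + 1/k` times `(1 + y) e^{−y}`, which is `< 1`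
for `y ≠ 0` by `1 + y < e^y`; hence `c + 1/k` is the unique maximiser.
-/

open Real

theorem add_one_mul_exp_neg_lt_one {y : ℝ} (hy : y ≠ 0) : (y + 1) * exp (-y) < 1 := by
  calc (y + 1) * exp (-y) < exp y * exp (-y) :=
        mul_lt_mul_of_pos_right (add_one_lt_exp hy) (exp_pos _)
    _ = 1 := by rw [← exp_add, add_neg_cancel, exp_zero]

theorem mul_exp_neg_mul_mul_sub_lt {A k δ δs : ℝ} (hA : 0 < A) (hk : 0 < k) (hδ : δ ≠ δs) :
    A * exp (-(k * δ)) * (δ - (δs - 1 / k))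
      < A * exp (-(k * δs)) * (δs - (δs - 1 / k)) := by
  set y := k * (δ - δs) with hy_def
  have hy : y ≠ 0 := mul_ne_zero hk.ne' (sub_ne_zero.mpr hδ)
  have hlhs : A * exp (-(k * δ)) * (δ - (δs - 1 / k))
      = A * exp (-(k * δs)) / k * ((y + 1) * exp (-y)) := by
    have hexp : exp (-(k * δ)) = exp (-(k * δs)) * exp (-y) := by
      rw [← exp_add, hy_def]; ring_nf
    rw [hexp]
    field_simp
    ring
  have hrhs : A * exp (-(k * δs)) * (δs - (δs - 1 / k)) = A * exp (-(k * δs)) / k * 1 := by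
    ring
  rw [hlhs, hrhs]
  exact mul_lt_mul_of_pos_left (add_one_mul_exp_neg_lt_one hy) (by positivity)

theorem stmt_5_general (T A k η : ℝ) (hA : 0 < A) (hk : 0 < k)
    (θ₀ θ₁ θ₂ : ℝ → ℝ → ℝ)
    (u : ℝ → ℝ → ℤ → ℝ → ℝ)
    (hu : ∀ (t s : ℝ) (q : ℤ) (x : ℝ),
      u t s q x = x + θ₀ t s + (q : ℝ) * θ₁ t s - η * (q : ℝ) ^ 2 * θ₂ t s) :
    ∀ t ∈ Set.Icc (0 : ℝ) T, ∀ (s : ℝ) (q : ℤ) (x : ℝ),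
      ∀ δp δm : ℝ,
        δp = 1 / k - s + θ₁ t s + η * (1 - 2 * (q : ℝ)) * θ₂ t s →
        δm = 1 / k + s - θ₁ t s + η * (1 + 2 * (q : ℝ)) * θ₂ t s →
          -- (i) the ask functional attains its supremum at the unique point `δ⁺*`
          (∀ δ : ℝ, δ ≠ δp →
            A * Real.exp (-(k * δ)) * (u t s (q - 1) (x + s + δ) - u t s q x)
              < A * Real.exp (-(k * δp)) * (u t s (q - 1) (x + s + δp) - u t s q x)) ∧
          -- (ii) the bid functional attains its supremum at the unique point `δ⁻*`
          (∀ δ : ℝ, δ ≠ δm →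
            A * Real.exp (-(k * δ)) * (u t s (q + 1) (x - s + δ) - u t s q x)
              < A * Real.exp (-(k * δm)) * (u t s (q + 1) (x - s + δm) - u t s q x)) ∧
          -- (iii) optimal spread and indifference price
          δp + δm = 2 / k + 2 * η * θ₂ t s ∧
          s + (δp - δm) / 2 = θ₁ t s - 2 * η * (q : ℝ) * θ₂ t s := by
  intro t _ s q x δp δm hδp hδm
  have ask_gain (δ : ℝ) : u t s (q - 1) (x + s + δ) - u t s q x = δ - (δp - 1 / k) := by
    rw [hu, hu, hδp]; push_cast; ring
  have bid_gain (δ : ℝ) : u t s (q + 1) (x - s + δ) - u t s q x = δ - (δm - 1 / k) := by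
    rw [hu, hu, hδm]; push_cast; ring
  refine ⟨fun δ hδ => ?_, fun δ hδ => ?_, ?_, ?_⟩
  · rw [ask_gain, ask_gain]
    exact mul_exp_neg_mul_mul_sub_lt hA hk hδ
  · rw [bid_gain, bid_gain]
    exact mul_exp_neg_mul_mul_sub_lt hA hk hδ
  · rw [hδp, hδm]; ring
  · rw [hδp, hδm]; ring

/-- Optimal-quotes computation for the linear utility with quadratic inventory
penalty (Theorems 2 and 3 of the paper): for the ansatz
`u(t,s,q,x) = x + θ₀(t,s) + q·θ₁(t,s) − η·q²·θ₂(t,s)`, the ask (resp. bid)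
functional attains its supremum at the unique point
`δ⁺* = 1/k − s + θ₁ + η(1−2q)θ₂` (resp. `δ⁻* = 1/k + s − θ₁ + η(1+2q)θ₂`), so that
the optimal spread is `2/k + 2ηθ₂` and the indifference price is `θ₁ − 2ηqθ₂`. -/
theorem stmt_5 (T A k η : ℝ) (hT : 0 < T) (hA : 0 < A) (hk : 0 < k) (hη : 0 ≤ η)
    (θ₀ θ₁ θ₂ : ℝ → ℝ → ℝ)
    (u : ℝ → ℝ → ℤ → ℝ → ℝ)
    (hu : ∀ (t s : ℝ) (q : ℤ) (x : ℝ),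
      u t s q x = x + θ₀ t s + (q : ℝ) * θ₁ t s - η * (q : ℝ) ^ 2 * θ₂ t s) :
    ∀ t ∈ Set.Icc (0 : ℝ) T, ∀ (s : ℝ) (q : ℤ) (x : ℝ),
      ∀ δp δm : ℝ,
        δp = 1 / k - s + θ₁ t s + η * (1 - 2 * (q : ℝ)) * θ₂ t s →
        δm = 1 / k + s - θ₁ t s + η * (1 + 2 * (q : ℝ)) * θ₂ t s →
          -- (i) the ask functional attains its supremum at the unique point `δ⁺*`
          (∀ δ : ℝ, δ ≠ δp →
            A * Real.exp (-(k * δ)) * (u t s (q - 1) (x + s + δ) - u t s q x)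
              < A * Real.exp (-(k * δp)) * (u t s (q - 1) (x + s + δp) - u t s q x)) ∧
          -- (ii) the bid functional attains its supremum at the unique point `δ⁻*`
          (∀ δ : ℝ, δ ≠ δm →
            A * Real.exp (-(k * δ)) * (u t s (q + 1) (x - s + δ) - u t s q x)
              < A * Real.exp (-(k * δm)) * (u t s (q + 1) (x - s + δm) - u t s q x)) ∧
          -- (iii) optimal spread and indifference price
          δp + δm = 2 / k + 2 * η * θ₂ t s ∧
          s + (δp - δm) / 2 = θ₁ t s - 2 * η * (q : ℝ) * θ₂ t s :=
  stmt_5_general T A k η hA hk θ₀ θ₁ θ₂ u hu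
end

section
/- Let T > 0, A > 0, k > 0, η ≥ 0, let b, σ : [0,T] × ℝ → ℝ, and let π : ℝ → ℝ be continuous. Suppose θ₁, θ₂, θ₀ : [0,T] × ℝ → ℝ are continuously differentiable in t and twice continuously differentiable in s and satisfy on [0,T] × ℝ: ∂_t θ₁ + b·∂_s θ₁ + (1/2)σ²·∂_{ss} θ₁ = 0 with θ₁(T,s) = s; ∂_t θ₂ + b·∂_s θ₂ + (1/2)σ²·∂_{ss} θ₂ = 0 with θ₂(T,s) = π(s); and ∂_t θ₀ + b·∂_s θ₀ + (1/2)σ²·∂_{ss} θ₀ + (2A/(e·k))·(1 − k·η·θ₂(t,s)) = 0 with θ₀(T,s) = 0. Define u̲(t,s,q,x) = x + θ₀(t,s) + q·θ₁(t,s) − η·q²·θ₂(t,s) on [0,T] × ℝ × ℤ × ℝ. Then HJB(u̲)(t,s,q,x) ≥ 0 for all (t,s,q,x) ∈ [0,T] × ℝ × ℤ × ℝ, and u̲(T,s,q,x) = x + q·s − η·q²·π(s). -/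
/-!
The ansatz is affine in `θ₀, θ₁, θ₂`, so the diffusion part of `HJB(u̲)` is the same affine
combination of their generators, which the three PDEs reduce to `−(2A/(e·k))·(1 − k·η·θ₂)`.
The jump differences are `δ + c±` with `c⁺ + c⁻ = −2·η·θ₂`, and
`sup_δ A·e^{−kδ}·(δ + c) = (A/(e·k))·e^{kc}`, attained at `δ = 1/k − c`. The claim is then
`e^{kc⁺} + e^{kc⁻} ≥ 2 + k·c⁺ + k·c⁻`, i.e. `e^y ≥ 1 + y` twice.
-/

lemma deriv_add_const_mul_sub_const_mul {g₀ g₁ g₂ : ℝ → ℝ} (c₁ c₂ : ℝ)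
    (h₀ : Differentiable ℝ g₀) (h₁ : Differentiable ℝ g₁) (h₂ : Differentiable ℝ g₂) :
    deriv (fun z => g₀ z + c₁ * g₁ z - c₂ * g₂ z)
      = fun z => deriv g₀ z + c₁ * deriv g₁ z - c₂ * deriv g₂ z :=
  funext fun z => (((h₀ z).hasDerivAt.add ((h₁ z).hasDerivAt.const_mul c₁)).sub
    ((h₂ z).hasDerivAt.const_mul c₂)).deriv

noncomputable def backwardGenerator (b σ θ : ℝ → ℝ → ℝ) (t s : ℝ) : ℝ :=
  deriv (fun τ => θ τ s) t + b t s * deriv (fun y => θ t y) s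
    + 1 / 2 * (σ t s) ^ 2 * deriv (deriv (fun y => θ t y)) s

lemma HJB_eq_backwardGenerator_add_iSup_add_iSup (A k : ℝ) (b σ : ℝ → ℝ → ℝ)
    (u : ℝ → ℝ → ℤ → ℝ → ℝ) (t s : ℝ) (q : ℤ) (x : ℝ) :
    HJB A k b σ u t s q x = backwardGenerator b σ (fun t s => u t s q x) t s
      + (⨆ δ : ℝ, A * Real.exp (-(k * δ)) * (u t s (q - 1) (x + s + δ) - u t s q x))
      + (⨆ δ : ℝ, A * Real.exp (-(k * δ)) * (u t s (q + 1) (x - s + δ) - u t s q x)) :=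
  rfl

lemma backwardGenerator_affine (b σ : ℝ → ℝ → ℝ) (a c₁ c₂ : ℝ) {θ₀ θ₁ θ₂ : ℝ → ℝ → ℝ}
    (h₀t : ∀ s, ContDiff ℝ 1 fun τ => θ₀ τ s) (h₀s : ∀ t, ContDiff ℝ 2 fun y => θ₀ t y)
    (h₁t : ∀ s, ContDiff ℝ 1 fun τ => θ₁ τ s) (h₁s : ∀ t, ContDiff ℝ 2 fun y => θ₁ t y)
    (h₂t : ∀ s, ContDiff ℝ 1 fun τ => θ₂ τ s) (h₂s : ∀ t, ContDiff ℝ 2 fun y => θ₂ t y)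
    (t s : ℝ) :
    backwardGenerator b σ (fun t s => a + θ₀ t s + c₁ * θ₁ t s - c₂ * θ₂ t s) t s
      = backwardGenerator b σ θ₀ t s + c₁ * backwardGenerator b σ θ₁ t s
        - c₂ * backwardGenerator b σ θ₂ t s := by
  have hτ := deriv_add_const_mul_sub_const_mul c₁ c₂
    (((h₀t s).differentiable one_ne_zero).const_add a) ((h₁t s).differentiable one_ne_zero)
    ((h₂t s).differentiable one_ne_zero)
  have hy := deriv_add_const_mul_sub_const_mul c₁ c₂
    (((h₀s t).differentiable two_ne_zero).const_add a) ((h₁s t).differentiable two_ne_zero)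
    ((h₂s t).differentiable two_ne_zero)
  have hyy := deriv_add_const_mul_sub_const_mul c₁ c₂
    (h₀s t).differentiable_deriv_two (h₁s t).differentiable_deriv_two
    (h₂s t).differentiable_deriv_two
  simp only [backwardGenerator, hτ, hy, deriv_const_add', hyy]
  ring

lemma iSup_mul_exp_neg_mul_add {A k : ℝ} (hA : 0 ≤ A) (hk : 0 < k) (c : ℝ) :
    ⨆ δ : ℝ, A * Real.exp (-(k * δ)) * (δ + c) = A / (Real.exp 1 * k) * Real.exp (k * c) := by
  have hbound : ∀ δ, A * Real.exp (-(k * δ)) * (δ + c)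
      ≤ A / (Real.exp 1 * k) * Real.exp (k * c) := by
    intro δ
    calc A * Real.exp (-(k * δ)) * (δ + c)
        = A / k * Real.exp (k * c) * (k * (δ + c) * Real.exp (-(k * (δ + c)))) := by
          rw [show -(k * (δ + c)) = -(k * δ) + -(k * c) by ring, Real.exp_add,
            Real.exp_neg (k * c)]
          field_simp
      _ ≤ A / k * Real.exp (k * c) * Real.exp (-1) := by
          gcongr; exact Real.mul_exp_neg_le_exp_neg_one _
      _ = A / (Real.exp 1 * k) * Real.exp (k * c) := by rw [Real.exp_neg]; field_simp
  refine le_antisymm (ciSup_le hbound) ?_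
  calc A / (Real.exp 1 * k) * Real.exp (k * c)
      = A * Real.exp (-(k * (k⁻¹ - c))) * (k⁻¹ - c + c) := by
        rw [sub_add_cancel, show -(k * (k⁻¹ - c)) = k * c - 1 by field_simp; ring, Real.exp_sub]
        field_simp
    _ ≤ ⨆ δ : ℝ, A * Real.exp (-(k * δ)) * (δ + c) :=
        le_ciSup ⟨_, Set.forall_mem_range.2 hbound⟩ (k⁻¹ - c)

theorem stmt_7_general (T A k η : ℝ) (hA : 0 < A) (hk : 0 < k)
    (b σ : ℝ → ℝ → ℝ) (π : ℝ → ℝ)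
    (θ₀ θ₁ θ₂ : ℝ → ℝ → ℝ)
    (hθ₁t : ∀ s : ℝ, ContDiff ℝ 1 fun τ => θ₁ τ s)
    (hθ₁s : ∀ t : ℝ, ContDiff ℝ 2 fun y => θ₁ t y)
    (hθ₁pde : ∀ t ∈ Set.Icc (0 : ℝ) T, ∀ s : ℝ,
      deriv (fun τ => θ₁ τ s) t + b t s * deriv (fun y => θ₁ t y) s
        + 1 / 2 * (σ t s) ^ 2 * deriv (deriv (fun y => θ₁ t y)) s = 0)
    (hθ₁T : ∀ s : ℝ, θ₁ T s = s)
    (hθ₂t : ∀ s : ℝ, ContDiff ℝ 1 fun τ => θ₂ τ s)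
    (hθ₂s : ∀ t : ℝ, ContDiff ℝ 2 fun y => θ₂ t y)
    (hθ₂pde : ∀ t ∈ Set.Icc (0 : ℝ) T, ∀ s : ℝ,
      deriv (fun τ => θ₂ τ s) t + b t s * deriv (fun y => θ₂ t y) s
        + 1 / 2 * (σ t s) ^ 2 * deriv (deriv (fun y => θ₂ t y)) s = 0)
    (hθ₂T : ∀ s : ℝ, θ₂ T s = π s)
    (hθ₀t : ∀ s : ℝ, ContDiff ℝ 1 fun τ => θ₀ τ s)
    (hθ₀s : ∀ t : ℝ, ContDiff ℝ 2 fun y => θ₀ t y)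
    (hθ₀pde : ∀ t ∈ Set.Icc (0 : ℝ) T, ∀ s : ℝ,
      deriv (fun τ => θ₀ τ s) t + b t s * deriv (fun y => θ₀ t y) s
        + 1 / 2 * (σ t s) ^ 2 * deriv (deriv (fun y => θ₀ t y)) s
        + 2 * A / (Real.exp 1 * k) * (1 - k * η * θ₂ t s) = 0)
    (hθ₀T : ∀ s : ℝ, θ₀ T s = 0)
    (u : ℝ → ℝ → ℤ → ℝ → ℝ)
    (hu : ∀ (t s : ℝ) (q : ℤ) (x : ℝ),
      u t s q x = x + θ₀ t s + (q : ℝ) * θ₁ t s - η * (q : ℝ) ^ 2 * θ₂ t s) :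
    (∀ t ∈ Set.Icc (0 : ℝ) T, ∀ (s : ℝ) (q : ℤ) (x : ℝ),
      0 ≤ HJB A k b σ u t s q x) ∧
    (∀ (s : ℝ) (q : ℤ) (x : ℝ),
      u T s q x = x + (q : ℝ) * s - η * (q : ℝ) ^ 2 * π s) := by
  refine ⟨fun t ht s q x => ?_, fun s q x => by rw [hu, hθ₀T, hθ₁T, hθ₂T]; ring⟩
  have hslice : (fun t s => u t s q x)
      = fun t s => x + θ₀ t s + (q : ℝ) * θ₁ t s - η * (q : ℝ) ^ 2 * θ₂ t s := by
    funext t s; exact hu t s q x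
  have hdiffusion : backwardGenerator b σ (fun t s => u t s q x) t s
      = -(2 * A / (Real.exp 1 * k) * (1 - k * η * θ₂ t s)) := by
    rw [hslice, backwardGenerator_affine b σ _ _ _ hθ₀t hθ₀s hθ₁t hθ₁s hθ₂t hθ₂s]
    unfold backwardGenerator
    linear_combination hθ₀pde t ht s + (q : ℝ) * hθ₁pde t ht s
      - η * (q : ℝ) ^ 2 * hθ₂pde t ht s
  set cSell := s - θ₁ t s + η * (2 * (q : ℝ) - 1) * θ₂ t s
  set cBuy := -s + θ₁ t s - η * (2 * (q : ℝ) + 1) * θ₂ t s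
  have hsell : (⨆ δ : ℝ, A * Real.exp (-(k * δ)) * (u t s (q - 1) (x + s + δ) - u t s q x))
      = A / (Real.exp 1 * k) * Real.exp (k * cSell) :=
    (iSup_congr fun δ => by rw [hu, hu]; push_cast; ring).trans
      (iSup_mul_exp_neg_mul_add hA.le hk cSell)
  have hbuy : (⨆ δ : ℝ, A * Real.exp (-(k * δ)) * (u t s (q + 1) (x - s + δ) - u t s q x))
      = A / (Real.exp 1 * k) * Real.exp (k * cBuy) :=
    (iSup_congr fun δ => by rw [hu, hu]; push_cast; ring).trans
      (iSup_mul_exp_neg_mul_add hA.le hk cBuy)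
  rw [HJB_eq_backwardGenerator_add_iSup_add_iSup, hdiffusion, hsell, hbuy]
  have hM : 0 ≤ A / (Real.exp 1 * k) := by positivity
  have hexp := add_le_add
    (mul_le_mul_of_nonneg_left (Real.add_one_le_exp (k * cSell)) hM)
    (mul_le_mul_of_nonneg_left (Real.add_one_le_exp (k * cBuy)) hM)
  linear_combination hexp

/-- Subsolution claim of Theorem 3 (linear utility with general quadratic inventory
penalty `φ(s,q,x) = x + q·s − η·q²·π(s)`): with `θ₁, θ₂, θ₀` solving the stated
backward PDEs with terminal data `s`, `π(s)`, `0` respectively, the function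
`u̲(t,s,q,x) = x + θ₀(t,s) + q·θ₁(t,s) − η·q²·θ₂(t,s)` satisfies `HJB(u̲) ≥ 0`
and `u̲(T,s,q,x) = x + q·s − η·q²·π(s)`. -/
theorem stmt_7 (T A k η : ℝ) (hT : 0 < T) (hA : 0 < A) (hk : 0 < k) (hη : 0 ≤ η)
    (b σ : ℝ → ℝ → ℝ) (π : ℝ → ℝ) (hπ : Continuous π)
    (θ₀ θ₁ θ₂ : ℝ → ℝ → ℝ)
    (hθ₁t : ∀ s : ℝ, ContDiff ℝ 1 fun τ => θ₁ τ s)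
    (hθ₁s : ∀ t : ℝ, ContDiff ℝ 2 fun y => θ₁ t y)
    (hθ₁pde : ∀ t ∈ Set.Icc (0 : ℝ) T, ∀ s : ℝ,
      deriv (fun τ => θ₁ τ s) t + b t s * deriv (fun y => θ₁ t y) s
        + 1 / 2 * (σ t s) ^ 2 * deriv (deriv (fun y => θ₁ t y)) s = 0)
    (hθ₁T : ∀ s : ℝ, θ₁ T s = s)
    (hθ₂t : ∀ s : ℝ, ContDiff ℝ 1 fun τ => θ₂ τ s)
    (hθ₂s : ∀ t : ℝ, ContDiff ℝ 2 fun y => θ₂ t y)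
    (hθ₂pde : ∀ t ∈ Set.Icc (0 : ℝ) T, ∀ s : ℝ,
      deriv (fun τ => θ₂ τ s) t + b t s * deriv (fun y => θ₂ t y) s
        + 1 / 2 * (σ t s) ^ 2 * deriv (deriv (fun y => θ₂ t y)) s = 0)
    (hθ₂T : ∀ s : ℝ, θ₂ T s = π s)
    (hθ₀t : ∀ s : ℝ, ContDiff ℝ 1 fun τ => θ₀ τ s)
    (hθ₀s : ∀ t : ℝ, ContDiff ℝ 2 fun y => θ₀ t y)
    (hθ₀pde : ∀ t ∈ Set.Icc (0 : ℝ) T, ∀ s : ℝ,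
      deriv (fun τ => θ₀ τ s) t + b t s * deriv (fun y => θ₀ t y) s
        + 1 / 2 * (σ t s) ^ 2 * deriv (deriv (fun y => θ₀ t y)) s
        + 2 * A / (Real.exp 1 * k) * (1 - k * η * θ₂ t s) = 0)
    (hθ₀T : ∀ s : ℝ, θ₀ T s = 0)
    (u : ℝ → ℝ → ℤ → ℝ → ℝ)
    (hu : ∀ (t s : ℝ) (q : ℤ) (x : ℝ),
      u t s q x = x + θ₀ t s + (q : ℝ) * θ₁ t s - η * (q : ℝ) ^ 2 * θ₂ t s) :
    (∀ t ∈ Set.Icc (0 : ℝ) T, ∀ (s : ℝ) (q : ℤ) (x : ℝ),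
      0 ≤ HJB A k b σ u t s q x) ∧
    (∀ (s : ℝ) (q : ℤ) (x : ℝ),
      u T s q x = x + (q : ℝ) * s - η * (q : ℝ) ^ 2 * π s) :=
  stmt_7_general T A k η hA hk b σ π θ₀ θ₁ θ₂ hθ₁t hθ₁s hθ₁pde hθ₁T hθ₂t hθ₂s hθ₂pde hθ₂T hθ₀t hθ₀s
    hθ₀pde hθ₀T u hu
end

section
/- Let A > 0, k > 0, γ > 0 and let θ₀, θ₂ : [0,T] → ℝ and θ₁ : [0,T] × ℝ → ℝ be arbitrary functions. Define u(t,s,q,x) = −exp(−γ·(x + θ₀(t) + q·θ₁(t,s) + q²·θ₂(t))) for (t,s,q,x) ∈ [0,T] × ℝ × ℤ × ℝ. Then for every (t,s,q,x): (i) the ask functional δ ↦ A·e^{−kδ}·(u(t,s,q−1,x+s+δ) − u(t,s,q,x)) attains its supremum over δ ∈ ℝ at the unique point δ⁺* = (1/γ)·log(1+γ/k) − s + θ₁(t,s) − (1−2q)·θ₂(t); (ii) the bid functional δ ↦ A·e^{−kδ}·(u(t,s,q+1,x−s+δ) − u(t,s,q,x)) attains its supremum at the unique point δ⁻* = (1/γ)·log(1+γ/k)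 + s − θ₁(t,s) − (1+2q)·θ₂(t); (iii) consequently the optimal bid–ask spread is ψ* = δ⁺* + δ⁻* = (2/γ)·log(1+γ/k) − 2θ₂(t), and the indifference price r* = s + (δ⁺* − δ⁻*)/2 equals θ₁(t,s) + 2q·θ₂(t). -/
/-!
With the exponential ansatz, a fill at distance `δ` multiplies the value `−e^E` by
`e^{−γ(δ − δ₀)}`, where `δ₀` is the distance at which the fill leaves the utility unchanged.
Both quote functionals are therefore `A e^E · e^{−kδ}(1 − e^{−γ(δ − δ₀)})`, and the substitution
`δ = δ₀ + log(1 + γ/k)/γ + w` turns the last factor into a positive multiple of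
`(k + γ)e^{−kw} − k e^{−(k+γ)w}`. By strict convexity of `exp` this is `< γ` unless `w = 0`,
which gives the unique maximiser; spread and indifference price are then arithmetic.
-/

open Real

/-- Rate of utility gain of a quote at distance `δ` whose fill is utility-neutral at `δ₀`,
up to the positive factor `A e^E`. -/
noncomputable def fillGain (k γ δ₀ δ : ℝ) : ℝ :=
  exp (-(k * δ)) * (1 - exp (-(γ * (δ - δ₀))))

noncomputable def optimalQuote (k γ δ₀ : ℝ) : ℝ :=
  δ₀ + log (1 + γ / k) / γ

/-- Jensen for `exp` at the points `0` and `-(k + γ) w` with weights `γ/(k+γ)`, `k/(k+γ)`. -/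
lemma add_mul_exp_neg_mul_lt {k γ w : ℝ} (hk : 0 < k) (hγ : 0 < γ) (hw : w ≠ 0) :
    (k + γ) * exp (-(k * w)) < γ + k * exp (-((k + γ) * w)) := by
  have hkγ : 0 < k + γ := by linarith
  have hne : (0 : ℝ) ≠ -((k + γ) * w) := by
    simpa [eq_comm] using mul_ne_zero hkγ.ne' hw
  have hjensen := strictConvexOn_exp.2 (Set.mem_univ 0) (Set.mem_univ _) hne
    (div_pos hγ hkγ) (div_pos hk hkγ) (by field_simp; ring)
  have hmid : γ / (k + γ) * 0 + k / (k + γ) * -((k + γ) * w) = -(k * w) := by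
    field_simp
    ring
  simp only [smul_eq_mul, hmid, exp_zero, mul_one] at hjensen
  calc (k + γ) * exp (-(k * w))
      < (k + γ) * (γ / (k + γ) + k / (k + γ) * exp (-((k + γ) * w))) :=
        mul_lt_mul_of_pos_left hjensen hkγ
    _ = γ + k * exp (-((k + γ) * w)) := by field_simp

lemma exp_neg_mul_optimalQuote_sub {k γ : ℝ} (hk : 0 < k) (hγ : 0 < γ) (δ₀ : ℝ) :
    exp (-(γ * (optimalQuote k γ δ₀ - δ₀))) = k / (k + γ) := by
  have hlog : γ * (optimalQuote k γ δ₀ - δ₀) = log (1 + γ / k) := by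
    unfold optimalQuote
    field_simp
    ring
  rw [hlog, exp_neg, exp_log (by positivity)]
  field_simp

lemma fillGain_optimalQuote_add {k γ : ℝ} (hk : 0 < k) (hγ : 0 < γ) (δ₀ w : ℝ) :
    fillGain k γ δ₀ (optimalQuote k γ δ₀ + w)
      = exp (-(k * optimalQuote k γ δ₀)) / (k + γ)
          * ((k + γ) * exp (-(k * w)) - k * exp (-((k + γ) * w))) := by
  have hkγ : k + γ ≠ 0 := by linarith
  have hopt := exp_neg_mul_optimalQuote_sub hk hγ δ₀
  have hfill :
      exp (-(γ * (optimalQuote k γ δ₀ + w - δ₀))) = k / (k + γ) * exp (-(γ * w)) := by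
    rw [← hopt, ← exp_add]
    ring_nf
  have hsplit : exp (-(k * (optimalQuote k γ δ₀ + w)))
      = exp (-(k * optimalQuote k γ δ₀)) * exp (-(k * w)) := by
    rw [← exp_add]
    ring_nf
  have hcombine : exp (-((k + γ) * w)) = exp (-(k * w)) * exp (-(γ * w)) := by
    rw [← exp_add]
    ring_nf
  rw [fillGain, hfill, hsplit, hcombine]
  field_simp

theorem fillGain_lt_fillGain_optimalQuote {k γ : ℝ} (hk : 0 < k) (hγ : 0 < γ) {δ₀ δ : ℝ}
    (hδ : δ ≠ optimalQuote k γ δ₀) :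
    fillGain k γ δ₀ δ < fillGain k γ δ₀ (optimalQuote k γ δ₀) := by
  have hkγ : 0 < k + γ := by linarith
  have hpos : 0 < exp (-(k * optimalQuote k γ δ₀)) / (k + γ) := by positivity
  obtain ⟨w, rfl⟩ : ∃ w, δ = optimalQuote k γ δ₀ + w := ⟨δ - optimalQuote k γ δ₀, by ring⟩
  have hw : w ≠ 0 := by simpa using hδ
  have hmax := fillGain_optimalQuote_add hk hγ δ₀ 0
  simp only [add_zero, mul_zero, neg_zero, exp_zero, mul_one] at hmax
  rw [fillGain_optimalQuote_add hk hγ, hmax]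
  exact mul_lt_mul_of_pos_left (by linarith [add_mul_exp_neg_mul_lt hk hγ hw]) hpos

theorem stmt_9_general (T A k γ : ℝ) (hA : 0 < A) (hk : 0 < k) (hγ : 0 < γ)
    (θ₀ θ₂ : ℝ → ℝ) (θ₁ : ℝ → ℝ → ℝ)
    (u : ℝ → ℝ → ℤ → ℝ → ℝ)
    (hu : ∀ (t s : ℝ) (q : ℤ) (x : ℝ),
      u t s q x
        = -Real.exp (-(γ * (x + θ₀ t + (q : ℝ) * θ₁ t s + (q : ℝ) ^ 2 * θ₂ t)))) :
    ∀ t ∈ Set.Icc (0 : ℝ) T, ∀ (s : ℝ) (q : ℤ) (x : ℝ),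
      ∀ δp δm : ℝ,
        δp = 1 / γ * Real.log (1 + γ / k) - s + θ₁ t s - (1 - 2 * (q : ℝ)) * θ₂ t →
        δm = 1 / γ * Real.log (1 + γ / k) + s - θ₁ t s - (1 + 2 * (q : ℝ)) * θ₂ t →
          -- (i) the ask functional attains its supremum at the unique point `δ⁺*`
          (∀ δ : ℝ, δ ≠ δp →
            A * Real.exp (-(k * δ)) * (u t s (q - 1) (x + s + δ) - u t s q x)
              < A * Real.exp (-(k * δp)) * (u t s (q - 1) (x + s + δp) - u t s q x)) ∧
          -- (ii) the bid functional attains its supremum at the unique point `δ⁻*`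
          (∀ δ : ℝ, δ ≠ δm →
            A * Real.exp (-(k * δ)) * (u t s (q + 1) (x - s + δ) - u t s q x)
              < A * Real.exp (-(k * δm)) * (u t s (q + 1) (x - s + δm) - u t s q x)) ∧
          -- (iii) optimal spread and indifference price
          δp + δm = 2 / γ * Real.log (1 + γ / k) - 2 * θ₂ t ∧
          s + (δp - δm) / 2 = θ₁ t s + 2 * (q : ℝ) * θ₂ t := by
  intro t _ s q x δp δm hδp hδm
  set E := -(γ * (x + θ₀ t + (q : ℝ) * θ₁ t s + (q : ℝ) ^ 2 * θ₂ t))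
  have hC : 0 < A * exp E := by positivity
  have hask : ∀ δ, A * exp (-(k * δ)) * (u t s (q - 1) (x + s + δ) - u t s q x)
      = A * exp E * fillGain k γ (-s + θ₁ t s - (1 - 2 * (q : ℝ)) * θ₂ t) δ := by
    intro δ
    have hexp : -(γ * (x + s + δ + θ₀ t + ((q - 1 : ℤ) : ℝ) * θ₁ t s
        + ((q - 1 : ℤ) : ℝ) ^ 2 * θ₂ t))
        = E + -(γ * (δ - (-s + θ₁ t s - (1 - 2 * (q : ℝ)) * θ₂ t))) := by
      push_cast; ring
    rw [hu, hu, hexp, exp_add, fillGain]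
    ring
  have hbid : ∀ δ, A * exp (-(k * δ)) * (u t s (q + 1) (x - s + δ) - u t s q x)
      = A * exp E * fillGain k γ (s - θ₁ t s - (1 + 2 * (q : ℝ)) * θ₂ t) δ := by
    intro δ
    have hexp : -(γ * (x - s + δ + θ₀ t + ((q + 1 : ℤ) : ℝ) * θ₁ t s
        + ((q + 1 : ℤ) : ℝ) ^ 2 * θ₂ t))
        = E + -(γ * (δ - (s - θ₁ t s - (1 + 2 * (q : ℝ)) * θ₂ t))) := by
      push_cast; ring
    rw [hu, hu, hexp, exp_add, fillGain]
    ring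
  have hδp' : δp = optimalQuote k γ (-s + θ₁ t s - (1 - 2 * (q : ℝ)) * θ₂ t) := by
    rw [hδp, optimalQuote]; ring
  have hδm' : δm = optimalQuote k γ (s - θ₁ t s - (1 + 2 * (q : ℝ)) * θ₂ t) := by
    rw [hδm, optimalQuote]; ring
  refine ⟨fun δ hδ => ?_, fun δ hδ => ?_, by rw [hδp, hδm]; ring, by rw [hδp, hδm]; ring⟩
  · rw [hask, hask, hδp']
    exact mul_lt_mul_of_pos_left (fillGain_lt_fillGain_optimalQuote hk hγ (hδp' ▸ hδ)) hC
  · rw [hbid, hbid, hδm']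
    exact mul_lt_mul_of_pos_left (fillGain_lt_fillGain_optimalQuote hk hγ (hδm' ▸ hδ)) hC

/-- Optimal-quotes computation for the exponential utility (Theorem 4 of the paper):
for the ansatz `u(t,s,q,x) = −exp(−γ(x + θ₀(t) + q·θ₁(t,s) + q²·θ₂(t)))`, the ask
(resp. bid) functional attains its supremum at the unique point
`δ⁺* = (1/γ)log(1+γ/k) − s + θ₁ − (1−2q)θ₂`
(resp. `δ⁻* = (1/γ)log(1+γ/k) + s − θ₁ − (1+2q)θ₂`), so that the optimal spread is
`(2/γ)log(1+γ/k) − 2θ₂` and the indifference price is `θ₁ + 2qθ₂`. -/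
theorem stmt_9 (T A k γ : ℝ) (hT : 0 < T) (hA : 0 < A) (hk : 0 < k) (hγ : 0 < γ)
    (θ₀ θ₂ : ℝ → ℝ) (θ₁ : ℝ → ℝ → ℝ)
    (u : ℝ → ℝ → ℤ → ℝ → ℝ)
    (hu : ∀ (t s : ℝ) (q : ℤ) (x : ℝ),
      u t s q x
        = -Real.exp (-(γ * (x + θ₀ t + (q : ℝ) * θ₁ t s + (q : ℝ) ^ 2 * θ₂ t)))) :
    ∀ t ∈ Set.Icc (0 : ℝ) T, ∀ (s : ℝ) (q : ℤ) (x : ℝ),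
      ∀ δp δm : ℝ,
        δp = 1 / γ * Real.log (1 + γ / k) - s + θ₁ t s - (1 - 2 * (q : ℝ)) * θ₂ t →
        δm = 1 / γ * Real.log (1 + γ / k) + s - θ₁ t s - (1 + 2 * (q : ℝ)) * θ₂ t →
          -- (i) the ask functional attains its supremum at the unique point `δ⁺*`
          (∀ δ : ℝ, δ ≠ δp →
            A * Real.exp (-(k * δ)) * (u t s (q - 1) (x + s + δ) - u t s q x)
              < A * Real.exp (-(k * δp)) * (u t s (q - 1) (x + s + δp) - u t s q x)) ∧
          -- (ii) the bid functional attains its supremum at the unique point `δ⁻*`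
          (∀ δ : ℝ, δ ≠ δm →
            A * Real.exp (-(k * δ)) * (u t s (q + 1) (x - s + δ) - u t s q x)
              < A * Real.exp (-(k * δm)) * (u t s (q + 1) (x - s + δm) - u t s q x)) ∧
          -- (iii) optimal spread and indifference price
          δp + δm = 2 / γ * Real.log (1 + γ / k) - 2 * θ₂ t ∧
          s + (δp - δm) / 2 = θ₁ t s + 2 * (q : ℝ) * θ₂ t :=
  stmt_9_general T A k γ hA hk hγ θ₀ θ₂ θ₁ u hu
end

section
/- Let T > 0, a > 0, μ ∈ ℝ, σ ∈ ℝ, A > 0, k > 0, γ > 0, η ≥ 0. Define θ₁(t,s) = s·e^{−a(T−t)} + μ·(1 − e^{−a(T−t)}) and θ₂(t) = −η − (γσ²/(4a))·(1 − e^{−2a(T−t)}). Then: (i) θ₁ satisfies ∂_t θ₁(t,s) + a·(μ−s)·∂_s θ₁(t,s) + (σ²/2)·∂_{ss} θ₁(t,s) = 0 on [0,T] × ℝ, θ₁(T,s) = s, and ∂_s θ₁(t,s) = e^{−a(T−t)} (independent of s); (ii) θ₂ satisfies θ₂′(t) = (γ/2)·σ²·e^{−2a(T−t)} on [0,T] and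 θ₂(T) = −η; (iii) for any function θ₀ : [0,T] → ℝ and u(t,s,q,x) = −exp(−γ·(x + θ₀(t) + q·θ₁(t,s) + q²·θ₂(t))), the ask functional δ ↦ A·e^{−kδ}·(u(t,s,q−1,x+s+δ) − u(t,s,q,x)) and the bid functional δ ↦ A·e^{−kδ}·(u(t,s,q+1,x−s+δ) − u(t,s,q,x)) attain their suprema over δ ∈ ℝ at the unique points δ±* = (1/γ)·log(1+γ/k) + η + (γσ²/(4a))·(1 − e^{−2a(T−t)}) ± ((μ−s)·(1 − e^{−a(T−t)}) − q·(2η + (γσ²/(2a))·(1 − e^{−2a(T−t)}))), so that the optimal spread is ψ* = (2/γ)·log(1+γ/k) + 2η + (γσ²/(2a))·(1 − e^{−2a(T−t)}) and the indifference price is r* = s·e^{−a(T−t)} + μ·(1 − e^{−a(T−t)}) − q·(2η + (γσ²/(2a))·(1 − e^{−2a(T−t)})). -/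
/-!
Since `θ₁` is affine in `s` and `θ₂` is explicit, (i) and (ii) are direct differentiation.
For (iii), writing the ansatz as `u q x = -exp (-γ (x + V q))`, the gain from an execution factors as
`exp (-γ (x + V q)) * (1 - exp (-γ (g + δ)))`, so each quote maximises
`f δ = exp (-k δ) * (1 - exp (-γ (g + δ)))`. For the point `δ*` with
`exp (-γ (g + δ*)) = k / (k + γ)`, dividing `f (δ* + w) < f δ*` by `exp (-k δ*)` leaves
`(k + γ) e^{-k w} < γ + k e^{-(k + γ) w}` for `w ≠ 0`, which is strict convexity of `exp`.
-/

open Real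

lemma hasDerivAt_exp_neg_mul_sub (c T t : ℝ) :
    HasDerivAt (fun τ => exp (-(c * (T - τ)))) (c * exp (-(c * (T - t)))) t := by
  simpa [mul_comm] using ((((hasDerivAt_id t).const_sub T).const_mul c).neg).exp

lemma exp_neg_mul_mul_one_sub_exp_lt {k γ g δ δstar : ℝ} (hk : 0 < k) (hγ : 0 < γ)
    (hstar : γ * (g + δstar) = log (1 + γ / k)) (hδ : δ ≠ δstar) :
    exp (-(k * δ)) * (1 - exp (-(γ * (g + δ))))
      < exp (-(k * δstar)) * (1 - exp (-(γ * (g + δstar)))) := by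
  have hkγ : 0 < k + γ := by positivity
  have hB : exp (-(γ * (g + δstar))) = k / (k + γ) := by
    rw [hstar, exp_neg, exp_log (by positivity)]
    field_simp
  obtain ⟨w, rfl⟩ : ∃ w, δ = δstar + w := ⟨δ - δstar, by ring⟩
  have hw : w ≠ 0 := by simpa using hδ
  have key := add_mul_exp_neg_mul_lt hk hγ hw
  rw [show -((k + γ) * w) = -(k * w) + -(γ * w) by ring, exp_add] at key
  rw [show -(γ * (g + (δstar + w))) = -(γ * (g + δstar)) + -(γ * w) by ring,
    show -(k * (δstar + w)) = -(k * δstar) + -(k * w) by ring, exp_add, exp_add, hB, mul_assoc,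
    mul_lt_mul_iff_right₀ (exp_pos _),
    show 1 - k / (k + γ) = γ / (k + γ) by field_simp; ring,
    show ∀ E, exp (-(k * w)) * (1 - k / (k + γ) * E)
      = ((k + γ) * exp (-(k * w)) - k * (exp (-(k * w)) * E)) / (k + γ) by
      intro E; field_simp]
  exact (div_lt_div_iff_of_pos_right hkγ).2 (by linarith)

lemma neg_exp_sub_neg_exp (γ X Δ : ℝ) :
    -exp (-(γ * (X + Δ))) - -exp (-(γ * X)) = exp (-(γ * X)) * (1 - exp (-(γ * Δ))) := by
  rw [mul_add, neg_add, exp_add]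
  ring

lemma exp_utility_quote_lt {A k γ : ℝ} (hA : 0 < A) (hk : 0 < k) (hγ : 0 < γ)
    {u : ℤ → ℝ → ℝ} {V : ℤ → ℝ} (hu : ∀ q x, u q x = -exp (-(γ * (x + V q))))
    (q q' : ℤ) (x x' : ℝ) {δ δstar : ℝ}
    (hstar : γ * (x' - x + V q' - V q + δstar) = log (1 + γ / k)) (hδ : δ ≠ δstar) :
    A * exp (-(k * δ)) * (u q' (x' + δ) - u q x)
      < A * exp (-(k * δstar)) * (u q' (x' + δstar) - u q x) := by
  have hdiff : ∀ d, u q' (x' + d) - u q x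
      = exp (-(γ * (x + V q))) * (1 - exp (-(γ * (x' - x + V q' - V q + d)))) := by
    intro d
    rw [hu, hu, ← neg_exp_sub_neg_exp, show x + V q + (x' - x + V q' - V q + d) = x' + d + V q' by
      ring]
  have h := mul_lt_mul_of_pos_left (exp_neg_mul_mul_one_sub_exp_lt hk hγ hstar hδ)
    (mul_pos hA (exp_pos (-(γ * (x + V q)))))
  rw [hdiff, hdiff]
  linear_combination h

theorem stmt_12_general (T a μ σ A k γ η : ℝ) (ha : 0 < a) (hA : 0 < A)
    (hk : 0 < k) (hγ : 0 < γ)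
    (θ₁ : ℝ → ℝ → ℝ)
    (hθ₁ : ∀ t s : ℝ,
      θ₁ t s = s * Real.exp (-(a * (T - t))) + μ * (1 - Real.exp (-(a * (T - t)))))
    (θ₂ : ℝ → ℝ)
    (hθ₂ : ∀ t : ℝ,
      θ₂ t = -η - γ * σ ^ 2 / (4 * a) * (1 - Real.exp (-(2 * a * (T - t))))) :
    -- (i)
    (∀ t s : ℝ,
      deriv (fun τ => θ₁ τ s) t + a * (μ - s) * deriv (fun y => θ₁ t y) s
          + σ ^ 2 / 2 * deriv (deriv (fun y => θ₁ t y)) s = 0 ∧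
        θ₁ T s = s ∧ deriv (fun y => θ₁ t y) s = Real.exp (-(a * (T - t)))) ∧
    -- (ii)
    (∀ t : ℝ, deriv θ₂ t = γ / 2 * σ ^ 2 * Real.exp (-(2 * a * (T - t)))) ∧
    θ₂ T = -η ∧
    -- (iii)
    (∀ θ₀ : ℝ → ℝ, ∀ u : ℝ → ℝ → ℤ → ℝ → ℝ,
      (∀ (t s : ℝ) (q : ℤ) (x : ℝ),
        u t s q x
          = -Real.exp (-(γ * (x + θ₀ t + (q : ℝ) * θ₁ t s + (q : ℝ) ^ 2 * θ₂ t)))) →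
      ∀ t ∈ Set.Icc (0 : ℝ) T, ∀ (s : ℝ) (q : ℤ) (x : ℝ),
        ∀ δp δm : ℝ,
          δp = 1 / γ * Real.log (1 + γ / k) + η
            + γ * σ ^ 2 / (4 * a) * (1 - Real.exp (-(2 * a * (T - t))))
            + ((μ - s) * (1 - Real.exp (-(a * (T - t))))
              - (q : ℝ) * (2 * η
                + γ * σ ^ 2 / (2 * a) * (1 - Real.exp (-(2 * a * (T - t)))))) →
          δm = 1 / γ * Real.log (1 + γ / k) + η
            + γ * σ ^ 2 / (4 * a) * (1 - Real.exp (-(2 * a * (T - t))))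
            - ((μ - s) * (1 - Real.exp (-(a * (T - t))))
              - (q : ℝ) * (2 * η
                + γ * σ ^ 2 / (2 * a) * (1 - Real.exp (-(2 * a * (T - t)))))) →
            -- the ask functional attains its supremum at the unique point `δ⁺*`
            (∀ δ : ℝ, δ ≠ δp →
              A * Real.exp (-(k * δ)) * (u t s (q - 1) (x + s + δ) - u t s q x)
                < A * Real.exp (-(k * δp))
                    * (u t s (q - 1) (x + s + δp) - u t s q x)) ∧
            -- the bid functional attains its supremum at the unique point `δ⁻*`
            (∀ δ : ℝ, δ ≠ δm →
              A * Real.exp (-(k * δ)) * (u t s (q + 1) (x - s + δ) - u t s q x)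
                < A * Real.exp (-(k * δm))
                    * (u t s (q + 1) (x - s + δm) - u t s q x)) ∧
            -- optimal spread
            δp + δm = 2 / γ * Real.log (1 + γ / k) + 2 * η
              + γ * σ ^ 2 / (2 * a) * (1 - Real.exp (-(2 * a * (T - t)))) ∧
            -- indifference price
            s + (δp - δm) / 2
              = s * Real.exp (-(a * (T - t))) + μ * (1 - Real.exp (-(a * (T - t))))
                - (q : ℝ) * (2 * η
                  + γ * σ ^ 2 / (2 * a) * (1 - Real.exp (-(2 * a * (T - t)))))) := by
  have hds : ∀ t, deriv (fun y => θ₁ t y) = fun _ => exp (-(a * (T - t))) := by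
    intro t; funext y; simp [hθ₁]
  refine ⟨fun t s => ⟨?_, by simp [hθ₁], by rw [hds]⟩, fun t => ?_, by simp [hθ₂], ?_⟩
  · have hdt := (((hasDerivAt_exp_neg_mul_sub a T t).const_mul s).fun_add
      (((hasDerivAt_exp_neg_mul_sub a T t).const_sub 1).const_mul μ)).deriv
    rw [show (fun τ => θ₁ τ s) = _ from funext fun τ => hθ₁ τ s, hdt, hds]
    simp only [deriv_const]
    ring
  · have h := (((hasDerivAt_exp_neg_mul_sub (2 * a) T t).const_sub 1).const_mul
      (γ * σ ^ 2 / (4 * a))).const_sub (-η)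
    rw [show θ₂ = _ from funext hθ₂, h.deriv]
    field_simp
    ring
  intro θ₀ u hu t _ s q x δp δm hδp hδm
  set V : ℤ → ℝ := fun q => θ₀ t + q * θ₁ t s + q ^ 2 * θ₂ t
  have hV : ∀ q x, u t s q x = -exp (-(γ * (x + V q))) := fun q x => by
    simp only [hu, V, add_assoc]
  refine ⟨fun δ hδ => exp_utility_quote_lt hA hk hγ hV q (q - 1) x (x + s) ?_ hδ,
    fun δ hδ => exp_utility_quote_lt hA hk hγ hV q (q + 1) x (x - s) ?_ hδ, ?_, ?_⟩
  · simp only [V, hθ₁, hθ₂, hδp]; push_cast; field_simp; ring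
  · simp only [V, hθ₁, hθ₂, hδm]; push_cast; field_simp; ring
  · rw [hδp, hδm]; field_simp; ring
  · rw [hδp, hδm]; ring

/-- Ornstein–Uhlenbeck example of Theorem 4 (mid-price `dS = a(μ−S)dt + σdW`,
exponential utility with risk aversion `γ` and inventory penalty `η`): with
`θ₁(t,s) = s·e^{−a(T−t)} + μ(1−e^{−a(T−t)})` and
`θ₂(t) = −η − (γσ²/(4a))(1−e^{−2a(T−t)})`, (i) `θ₁` solves the backward PDE with
terminal datum `s` and `∂ₛθ₁(t,s) = e^{−a(T−t)}`; (ii) `θ₂′(t) = (γ/2)σ²e^{−2a(T−t)}`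
and `θ₂(T) = −η`; (iii) for any `θ₀` and the ansatz
`u = −exp(−γ(x + θ₀(t) + qθ₁(t,s) + q²θ₂(t)))`, the ask/bid functionals attain their
suprema at the unique points `δ±*`, giving the stated optimal spread and
indifference price. -/
theorem stmt_12 (T a μ σ A k γ η : ℝ) (hT : 0 < T) (ha : 0 < a) (hA : 0 < A)
    (hk : 0 < k) (hγ : 0 < γ) (hη : 0 ≤ η)
    (θ₁ : ℝ → ℝ → ℝ)
    (hθ₁ : ∀ t s : ℝ,
      θ₁ t s = s * Real.exp (-(a * (T - t))) + μ * (1 - Real.exp (-(a * (T - t)))))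
    (θ₂ : ℝ → ℝ)
    (hθ₂ : ∀ t : ℝ,
      θ₂ t = -η - γ * σ ^ 2 / (4 * a) * (1 - Real.exp (-(2 * a * (T - t))))) :
    -- (i)
    (∀ t s : ℝ,
      deriv (fun τ => θ₁ τ s) t + a * (μ - s) * deriv (fun y => θ₁ t y) s
          + σ ^ 2 / 2 * deriv (deriv (fun y => θ₁ t y)) s = 0 ∧
        θ₁ T s = s ∧ deriv (fun y => θ₁ t y) s = Real.exp (-(a * (T - t)))) ∧
    -- (ii)
    (∀ t : ℝ, deriv θ₂ t = γ / 2 * σ ^ 2 * Real.exp (-(2 * a * (T - t)))) ∧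
    θ₂ T = -η ∧
    -- (iii)
    (∀ θ₀ : ℝ → ℝ, ∀ u : ℝ → ℝ → ℤ → ℝ → ℝ,
      (∀ (t s : ℝ) (q : ℤ) (x : ℝ),
        u t s q x
          = -Real.exp (-(γ * (x + θ₀ t + (q : ℝ) * θ₁ t s + (q : ℝ) ^ 2 * θ₂ t)))) →
      ∀ t ∈ Set.Icc (0 : ℝ) T, ∀ (s : ℝ) (q : ℤ) (x : ℝ),
        ∀ δp δm : ℝ,
          δp = 1 / γ * Real.log (1 + γ / k) + η
            + γ * σ ^ 2 / (4 * a) * (1 - Real.exp (-(2 * a * (T - t))))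
            + ((μ - s) * (1 - Real.exp (-(a * (T - t))))
              - (q : ℝ) * (2 * η
                + γ * σ ^ 2 / (2 * a) * (1 - Real.exp (-(2 * a * (T - t)))))) →
          δm = 1 / γ * Real.log (1 + γ / k) + η
            + γ * σ ^ 2 / (4 * a) * (1 - Real.exp (-(2 * a * (T - t))))
            - ((μ - s) * (1 - Real.exp (-(a * (T - t))))
              - (q : ℝ) * (2 * η
                + γ * σ ^ 2 / (2 * a) * (1 - Real.exp (-(2 * a * (T - t)))))) →
            -- the ask functional attains its supremum at the unique point `δ⁺*`
            (∀ δ : ℝ, δ ≠ δp →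
              A * Real.exp (-(k * δ)) * (u t s (q - 1) (x + s + δ) - u t s q x)
                < A * Real.exp (-(k * δp))
                    * (u t s (q - 1) (x + s + δp) - u t s q x)) ∧
            -- the bid functional attains its supremum at the unique point `δ⁻*`
            (∀ δ : ℝ, δ ≠ δm →
              A * Real.exp (-(k * δ)) * (u t s (q + 1) (x - s + δ) - u t s q x)
                < A * Real.exp (-(k * δm))
                    * (u t s (q + 1) (x - s + δm) - u t s q x)) ∧
            -- optimal spread
            δp + δm = 2 / γ * Real.log (1 + γ / k) + 2 * η
              + γ * σ ^ 2 / (2 * a) * (1 - Real.exp (-(2 * a * (T - t)))) ∧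
            -- indifference price
            s + (δp - δm) / 2
              = s * Real.exp (-(a * (T - t))) + μ * (1 - Real.exp (-(a * (T - t))))
                - (q : ℝ) * (2 * η
                  + γ * σ ^ 2 / (2 * a) * (1 - Real.exp (-(2 * a * (T - t)))))) :=
  stmt_12_general T a μ σ A k γ η ha hA hk hγ θ₁ hθ₁ θ₂ hθ₂
end
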